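/- Theorem 5.2 (the interpolation reconstruction is an angular convolution of the direct one): Let f be a Schwartz function on ℝ², ψ ∈ C^∞(S¹) even, χ ∈ C_c^∞(ℝ), s > 0 and h > 0 with s h = π/m for some integer m ≥ 1, and ω_j = ω(j s h). Define the direct reconstruction f_{ψ,δ}(x) = s h Σ_{j=1}^{2m} ψ(ω_j) G_f(ω_j, x·ω_j) and the interpolated reconstruction f_{ψ,χ}(x) = ∫_0^{2π} Σ_{j∈ℤ} ψ(ω_j) G_f(ω_j, x·ω(φ)) χ((φ − j s h)/(s h)) dφ (for each φ only finitely many terms are nonzero). Then for every r ≥ 0 and θ ∈ ℝ, f_{ψ,χ}(r ω(θ)) = ∫_ℝ (s h)^{−1} χ(t/(s h)) f_{ψ,δ}(r ω(θ − t)) dt; i.e., f_{ψ,χ} is the circular convolution in the angular variable of f_{ψ,δ} with χ_{sh}(t) = (s h)^{−1} χ(t/(s h)). -/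

import Mathlib

open MeasureTheory Real intervalIntegral
open scoped RealInnerProductSpace

noncomputable section

/-- The plane `ℝ²` as a Euclidean space. -/
abbrev E2 : Type := EuclideanSpace ℝ (Fin 2)

/-- The unit vector `ω(φ) = (cos φ, sin φ)`. -/
def omega (φ : ℝ) : E2 := (WithLp.equiv 2 (Fin 2 → ℝ)).symm ![Real.cos φ, Real.sin φ]

/-- The Fourier transform on `ℝ²`: `𝓕f(ξ) = ∫ e^{−i x·ξ} f(x) dx`. -/
def FT (f : E2 → ℂ) (ξ : E2) : ℂ :=
  ∫ x : E2, Complex.exp (-(Complex.I * (⟪x, ξ⟫ : ℂ))) * f x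

/-- The filtered projection `G_f(ω,p) = (1/(8π²)) ∫ e^{i p q} |q| 𝓕f(qω) dq`,
which equals `ℋℛf` by the Fourier slice theorem. -/
def filtProj (f : E2 → ℂ) (w : E2) (p : ℝ) : ℂ :=
  (1 / (8 * (π : ℂ) ^ 2)) * ∫ q : ℝ, Complex.exp (Complex.I * p * q) * (|q| : ℝ) * FT f (q • w)

/-- The direct reconstruction with angular step `s h = π/m`:
`f_{ψ,δ}(x) = s h Σ_{j=1}^{2m} ψ(ω_j) G_f(ω_j, x·ω_j)`, `ω_j = ω(j s h)`. -/
def directRec (f : E2 → ℂ) (ψ : E2 → ℂ) (s h : ℝ) (m : ℕ) (x : E2) : ℂ :=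
  ((s : ℂ) * (h : ℂ)) * ∑ j ∈ Finset.Icc 1 (2 * m),
    ψ (omega ((j : ℝ) * (s * h))) * filtProj f (omega ((j : ℝ) * (s * h))) ⟪x, omega ((j : ℝ) * (s * h))⟫

/-- The interpolated reconstruction
`f_{ψ,χ}(x) = ∫_0^{2π} Σ_{j∈ℤ} ψ(ω_j) G_f(ω_j, x·ω(φ)) χ((φ − j s h)/(s h)) dφ`
(for each `φ`, only finitely many terms of the sum are nonzero since `χ` has
compact support). -/
def interpRec (f : E2 → ℂ) (ψ : E2 → ℂ) (χ : ℝ → ℂ) (s h : ℝ) (x : E2) : ℂ :=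
  ∫ φ in (0:ℝ)..(2 * π), ∑' j : ℤ,
    ψ (omega ((j : ℝ) * (s * h))) * filtProj f (omega ((j : ℝ) * (s * h))) ⟪x, omega φ⟫ *
      χ ((φ - (j : ℝ) * (s * h)) / (s * h))

/-! ### Auxiliary lemmas -/

lemma inner_omega (a b : ℝ) : (⟪omega a, omega b⟫ : ℝ) = Real.cos (a - b) := by
  simp [omega, PiLp.inner_apply, Fin.sum_univ_two, Real.cos_sub]
  ring

lemma norm_omega (a : ℝ) : ‖omega a‖ = 1 := by
  rw [norm_eq_sqrt_real_inner, inner_omega]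
  simp

lemma omega_periodic : Function.Periodic omega (2 * π) := by
  intro x; simp [omega, Real.cos_add_two_pi, Real.sin_add_two_pi]

lemma inner_smul_omega (r a b : ℝ) : (⟪r • omega a, omega b⟫ : ℝ) = r * Real.cos (a - b) := by
  rw [real_inner_smul_left, inner_omega]

lemma FT_eq (f : SchwartzMap E2 ℂ) (ξ : E2) :
    FT (⇑f) ξ = FourierTransform.fourier (⇑f) ((2*π)⁻¹ • ξ) := by
  rw [Real.fourier_eq']
  unfold FT
  congr 1; funext x
  rw [smul_eq_mul, real_inner_smul_right]
  congr 2
  push_cast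
  have hπ : (π:ℂ) ≠ 0 := by exact_mod_cast Real.pi_ne_zero
  field_simp

lemma exists_schwartz (f : SchwartzMap E2 ℂ) (w : E2) (hw : ‖w‖ = 1) :
    ∃ G : SchwartzMap ℝ ℂ, ∀ q : ℝ, G q = FT (⇑f) (q • w) := by
  set L : ℝ →L[ℝ] E2 := ((2*π)⁻¹ • (1 : ℝ →L[ℝ] ℝ)).smulRight w with hL
  have hLapp : ∀ q : ℝ, L q = ((2*π)⁻¹ * q) • w := by
    intro q; simp [hL, ContinuousLinearMap.smulRight_apply, smul_smul]
  have hg : Function.HasTemperateGrowth (fun q : ℝ => L q) := L.hasTemperateGrowth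
  have hupper : ∃ (k : ℕ) (C : ℝ), ∀ x : ℝ, ‖x‖ ≤ C * (1 + ‖L x‖) ^ k := by
    refine ⟨1, 2*π, fun x => ?_⟩
    have h1 : ‖L x‖ = (2*π)⁻¹ * |x| := by
      rw [hLapp, norm_smul, hw, mul_one, Real.norm_eq_abs, abs_mul,
        abs_of_pos (by positivity : (0:ℝ) < (2*π)⁻¹)]
    have h2 : 2*π*((2*π)⁻¹*|x|) = |x| := by
      field_simp
    rw [h1, Real.norm_eq_abs, pow_one, mul_add, mul_one, h2]
    have := Real.pi_pos
    linarith [abs_nonneg x]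
  refine ⟨SchwartzMap.compCLM ℝ hg hupper (SchwartzMap.fourierTransformCLM ℂ f), fun q => ?_⟩
  have : (SchwartzMap.compCLM ℝ hg hupper (SchwartzMap.fourierTransformCLM ℂ f)) q
      = (SchwartzMap.fourierTransformCLM ℂ f) (L q) := rfl
  rw [this, SchwartzMap.fourierTransformCLM_apply, SchwartzMap.fourier_coe, hLapp, FT_eq, smul_smul]

lemma integrable_bound (G : SchwartzMap ℝ ℂ) : Integrable (fun q : ℝ => |q| * ‖G q‖) := by
  obtain ⟨C1, hC1pos, hC1⟩ := G.decay 1 0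
  obtain ⟨C3, hC3pos, hC3⟩ := G.decay 3 0
  refine (integrable_inv_one_add_sq.const_mul (C1 + C3)).mono'
    ((continuous_abs.mul G.continuous.norm).aestronglyMeasurable)
    (Filter.Eventually.of_forall fun q => ?_)
  have h1 := hC1 q
  have h3 := hC3 q
  rw [norm_iteratedFDeriv_zero, Real.norm_eq_abs] at h1 h3
  rw [Real.norm_eq_abs, _root_.abs_of_nonneg (by positivity : (0:ℝ) ≤ |q| * ‖G q‖),
    ← div_eq_mul_inv, le_div_iff₀ (by positivity)]
  have hq3 : |q|^3 = |q| * q^2 := by rw [← _root_.sq_abs]; ring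
  nlinarith [abs_nonneg q, norm_nonneg (G q)]

lemma filtProj_continuous (f : SchwartzMap E2 ℂ) (w : E2) (hw : ‖w‖ = 1) :
    Continuous (filtProj (⇑f) w) := by
  obtain ⟨G, hG⟩ := exists_schwartz f w hw
  unfold filtProj
  refine continuous_const.mul ?_
  have hrw : ∀ p : ℝ, (∫ q : ℝ, Complex.exp (Complex.I * p * q) * (|q| : ℝ) * FT (⇑f) (q • w))
      = ∫ q : ℝ, Complex.exp (Complex.I * p * q) * (|q| : ℝ) * G q := by
    intro p; congr 1; funext q; rw [hG]
  simp only [hrw]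
  apply MeasureTheory.continuous_of_dominated (bound := fun q : ℝ => |q| * ‖G q‖)
  · intro p
    apply Continuous.aestronglyMeasurable
    fun_prop
  · intro p
    refine Filter.Eventually.of_forall fun q => ?_
    have h1 : ‖Complex.exp (Complex.I * p * q)‖ = 1 := by
      rw [Complex.norm_exp]; simp
    rw [norm_mul, norm_mul, h1, one_mul, Complex.norm_real, Real.norm_eq_abs, _root_.abs_abs]
  · exact integrable_bound G
  · refine Filter.Eventually.of_forall fun q => ?_
    fun_prop

lemma sum_Icc_decompose {M : Type*} [AddCommMonoid M] (F : ℤ → M) (a : ℤ) (N : ℕ) (ha : 1 ≤ a) :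
    ∑ j ∈ Finset.Icc (1 - a*N) (a*N + a), F j
      = ∑ k ∈ Finset.Icc (1:ℤ) a, ∑ n ∈ Finset.Icc (-(N:ℤ)) N, F (k + a * n) := by
  have ha0 : 0 < a := ha
  rw [← Finset.sum_product']
  refine Finset.sum_nbij' (i := fun j : ℤ => ((j-1) % a + 1, (j-1) / a))
    (j := fun p : ℤ × ℤ => p.1 + a * p.2) ?_ ?_ ?_ ?_ ?_
  · intro j hj
    rw [Finset.mem_Icc] at hj
    obtain ⟨h1, h2⟩ := hj
    have hr0 : 0 ≤ (j-1) % a := Int.emod_nonneg _ (ne_of_gt ha0)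
    have hra : (j-1) % a < a := Int.emod_lt_of_pos _ ha0
    have hdm := Int.mul_ediv_add_emod (j-1) a
    rw [Finset.mem_product, Finset.mem_Icc, Finset.mem_Icc]
    dsimp only
    refine ⟨⟨by omega, by omega⟩, ?_, ?_⟩
    · by_contra hq; push_neg at hq
      nlinarith [mul_le_mul_of_nonneg_left (by omega : (j-1)/a ≤ -(N:ℤ) - 1) ha0.le]
    · by_contra hq; push_neg at hq
      nlinarith [mul_le_mul_of_nonneg_left (by omega : (N:ℤ) + 1 ≤ (j-1)/a) ha0.le]
  · intro p hp
    rw [Finset.mem_product, Finset.mem_Icc, Finset.mem_Icc] at hp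
    obtain ⟨⟨h1, h2⟩, h3, h4⟩ := hp
    rw [Finset.mem_Icc]
    constructor
    · nlinarith [mul_nonneg ha0.le (by linarith : (0:ℤ) ≤ p.2 + N)]
    · nlinarith [mul_nonneg ha0.le (by linarith : (0:ℤ) ≤ (N:ℤ) - p.2)]
  · intro j hj
    have hdm := Int.mul_ediv_add_emod (j-1) a
    dsimp only
    omega
  · intro p hp
    rw [Finset.mem_product, Finset.mem_Icc, Finset.mem_Icc] at hp
    obtain ⟨⟨h1, h2⟩, h3, h4⟩ := hp
    have e1 : p.1 + a * p.2 - 1 = (p.1 - 1) + a * p.2 := by ring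
    have e2 : ((p.1 - 1) + a * p.2) % a = p.1 - 1 := by
      rw [Int.add_mul_emod_self_left]
      exact Int.emod_eq_of_lt (by omega) (by omega)
    have e3 : ((p.1 - 1) + a * p.2) / a = p.2 := by
      rw [Int.add_mul_ediv_left _ _ (ne_of_gt ha0), Int.ediv_eq_zero_of_lt (by omega) (by omega)]
      ring
    ext
    · simp only [e1, e2]; ring
    · simp only [e1, e3]
  · intro j hj
    have hr0 : 0 ≤ (j-1) % a := Int.emod_nonneg _ (ne_of_gt ha0)
    have hdm := Int.mul_ediv_add_emod (j-1) a
    dsimp only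
    congr 1
    omega

/-- The interpolated integrand (with inner product evaluated). -/
def Tterm (f ψ : E2 → ℂ) (χ : ℝ → ℂ) (c r θ : ℝ) (j : ℤ) (φ : ℝ) : ℂ :=
  ψ (omega ((j:ℝ)*c)) * filtProj f (omega ((j:ℝ)*c)) (r * Real.cos (θ - φ)) *
    χ ((φ - (j:ℝ)*c)/c)

/-- The shifted integrand. -/
def gterm (f ψ : E2 → ℂ) (χ : ℝ → ℂ) (c r θ : ℝ) (j : ℤ) (t : ℝ) : ℂ :=
  ψ (omega ((j:ℝ)*c)) * filtProj f (omega ((j:ℝ)*c)) (r * Real.cos (θ - t - (j:ℝ)*c)) *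
    χ (t/c)

lemma Tterm_shift (f ψ : E2 → ℂ) (χ : ℝ → ℂ) (c r θ : ℝ) (j : ℤ) (t : ℝ) :
    Tterm f ψ χ c r θ j (t + (j:ℝ)*c) = gterm f ψ χ c r θ j t := by
  unfold Tterm gterm
  rw [sub_add_eq_sub_sub, add_sub_cancel_right]

lemma Tterm_cont (f : SchwartzMap E2 ℂ) (ψ : E2 → ℂ) (χ : ℝ → ℂ) (hχc : Continuous χ)
    (c r θ : ℝ) (j : ℤ) : Continuous (Tterm (⇑f) ψ χ c r θ j) := by
  unfold Tterm
  exact (continuous_const.mul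
    ((filtProj_continuous f _ (norm_omega _)).comp (by fun_prop))).mul (hχc.comp (by fun_prop))

lemma gterm_cont (f : SchwartzMap E2 ℂ) (ψ : E2 → ℂ) (χ : ℝ → ℂ) (hχc : Continuous χ)
    (c r θ : ℝ) (j : ℤ) : Continuous (gterm (⇑f) ψ χ c r θ j) := by
  unfold gterm
  exact (continuous_const.mul
    ((filtProj_continuous f _ (norm_omega _)).comp (by fun_prop))).mul (hχc.comp (by fun_prop))

lemma gterm_periodic (f ψ : E2 → ℂ) (χ : ℝ → ℂ) (c r θ : ℝ) (m : ℕ)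
    (h2mc : 2*(m:ℝ)*c = 2*π) (k n : ℤ) :
    gterm f ψ χ c r θ (k + 2*(m:ℤ)*n) = gterm f ψ χ c r θ k := by
  funext t
  unfold gterm
  have harg : ((k + 2*(m:ℤ)*n : ℤ) : ℝ) * c = (k:ℝ)*c + (n:ℝ) * (2*π) := by
    push_cast
    linear_combination (n:ℝ) * h2mc
  rw [harg, omega_periodic.int_mul n ((k:ℝ)*c)]
  have hcos : θ - t - ((k:ℝ)*c + (n:ℝ)*(2*π)) = (θ - t - (k:ℝ)*c) + ((-n : ℤ) : ℝ)*(2*π) := by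
    push_cast; ring
  rw [hcos, Real.cos_add_int_mul_two_pi]
/-- Theorem 5.2: the interpolated reconstruction is the circular convolution in
the angular variable of the direct one with `χ_{sh}(t) = (sh)^{−1} χ(t/(sh))`:
`f_{ψ,χ}(r ω(θ)) = ∫_ℝ (sh)^{−1} χ(t/(sh)) f_{ψ,δ}(r ω(θ − t)) dt`. -/
theorem interp_is_angular_convolution_of_direct (f : SchwartzMap E2 ℂ) (ψ : E2 → ℂ)
    (hψ_smooth : ContDiffOn ℝ (⊤ : ℕ∞) ψ {x : E2 | x ≠ 0})
    (hψ_even : ∀ w : E2, ψ (-w) = ψ w)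
    (χ : ℝ → ℂ) (hχ_smooth : ContDiff ℝ (⊤ : ℕ∞) χ) (hχ_supp : HasCompactSupport χ)
    (s h : ℝ) (hs : 0 < s) (hh : 0 < h)
    (m : ℕ) (hm : 1 ≤ m) (hsh : s * h = π / (m : ℝ))
    (r θ : ℝ) (hr : 0 ≤ r) :
    interpRec (⇑f) ψ χ s h (r • omega θ)
      = ∫ t : ℝ, ((s * h)⁻¹ : ℝ) * χ (t / (s * h)) * directRec (⇑f) ψ s h m (r • omega (θ - t)) := by
  have hπ := Real.pi_pos
  set c := s * h with hc_def
  clear_value c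
  have hc : 0 < c := by rw [hc_def]; exact mul_pos hs hh
  have hmR : (1:ℝ) ≤ (m:ℝ) := by exact_mod_cast hm
  have h2mc : 2 * (m:ℝ) * c = 2 * π := by
    rw [hsh]; field_simp
  have hcle : c ≤ π := by
    rw [hsh]; exact div_le_self hπ.le hmR
  have hχc : Continuous χ := hχ_smooth.continuous
  -- support radius of χ
  obtain ⟨R, hR⟩ := hχ_supp.isBounded.subset_closedBall 0
  set K : ℕ := ⌈R⌉₊ with hK_def
  have hKR : R ≤ K := Nat.le_ceil R
  clear_value K
  have hK0 : (0:ℝ) ≤ K := Nat.cast_nonneg K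
  have hKzero : ∀ x : ℝ, (K:ℝ) < |x| → χ x = 0 := by
    intro x hx
    by_contra hne
    have hmem : x ∈ tsupport χ := subset_tsupport χ (by simpa [Function.mem_support] using hne)
    have := hR hmem
    rw [Metric.mem_closedBall, Real.dist_eq, sub_zero] at this
    linarith
  set N : ℕ := K + 1 with hN_def
  have hNR : (N:ℝ) = (K:ℝ) + 1 := by rw [hN_def]; push_cast; ring
  clear_value N
  ------------------------------------------------------------------
  -- Step A : truncate the tsum on [0, 2π]
  ------------------------------------------------------------------
  have e1 : interpRec (⇑f) ψ χ s h (r • omega θ)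
      = ∫ φ in (0:ℝ)..(2*π), ∑' j : ℤ, Tterm (⇑f) ψ χ c r θ j φ := by
    unfold interpRec Tterm
    simp only [inner_smul_omega, ← hc_def]
  have hTzero : ∀ φ ∈ Set.uIcc (0:ℝ) (2*π), ∀ j : ℤ,
      j ∉ Finset.Icc (1 - 2*(m:ℤ)*(N:ℕ)) (2*(m:ℤ)*(N:ℕ) + 2*(m:ℤ)) →
      Tterm (⇑f) ψ χ c r θ j φ = 0 := by
    intro φ hφ j hj
    rw [Set.uIcc_of_le (by positivity), Set.mem_Icc] at hφ
    obtain ⟨hφ0, hφ2⟩ := hφ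
    have hj' : ¬(1 - 2*(m:ℤ)*(N:ℕ) ≤ j ∧ j ≤ 2*(m:ℤ)*(N:ℕ) + 2*(m:ℤ)) := by
      simpa [Finset.mem_Icc] using hj
    have hχ0 : χ ((φ - (j:ℝ)*c)/c) = 0 := by
      apply hKzero
      rw [abs_div, abs_of_pos hc, lt_div_iff₀ hc]
      rcases lt_or_ge j (1 - 2*(m:ℤ)*(N:ℕ)) with hlt | hge
      · -- j ≤ -2mN
        have hjR : (j:ℝ) ≤ -(2*(m:ℝ)*(N:ℝ)) := by
          have : j ≤ -(2*(m:ℤ)*(N:ℕ)) := by omega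
          exact_mod_cast this
        have h1 : (j:ℝ)*c ≤ (-(2*(m:ℝ)*(N:ℝ)))*c := mul_le_mul_of_nonneg_right hjR hc.le
        have h2 : (-(2*(m:ℝ)*(N:ℝ)))*c = -(2*π*(N:ℝ)) := by
          linear_combination (-(N:ℝ)) * h2mc
        have h3 : 2*π*(N:ℝ) ≤ φ - (j:ℝ)*c := by rw [h2] at h1; linarith
        have h4 : (K:ℝ)*c < 2*π*(N:ℝ) := by
          rw [hNR]
          have i1 : (K:ℝ)*c ≤ (K:ℝ)*π := mul_le_mul_of_nonneg_left hcle hK0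
          have i2 : 0 ≤ (K:ℝ)*π := mul_nonneg hK0 hπ.le
          linarith
        calc (K:ℝ)*c < 2*π*(N:ℝ) := h4
          _ ≤ φ - (j:ℝ)*c := h3
          _ ≤ |φ - (j:ℝ)*c| := le_abs_self _
      · -- j ≥ 2mN + 2m + 1
        have hjZ : 2*(m:ℤ)*(N:ℕ) + 2*(m:ℤ) + 1 ≤ j := by omega
        have hjR : 2*(m:ℝ)*(N:ℝ) + 2*(m:ℝ) + 1 ≤ (j:ℝ) := by exact_mod_cast hjZ
        have h1 : (2*(m:ℝ)*(N:ℝ) + 2*(m:ℝ) + 1)*c ≤ (j:ℝ)*c :=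
          mul_le_mul_of_nonneg_right hjR hc.le
        have h2 : (2*(m:ℝ)*(N:ℝ) + 2*(m:ℝ) + 1)*c = 2*π*(N:ℝ) + 2*π + c := by
          linear_combination ((N:ℝ) + 1) * h2mc
        have h3 : φ - (j:ℝ)*c ≤ -(2*π*(N:ℝ) + c) := by rw [h2] at h1; linarith
        have h4 : (K:ℝ)*c < 2*π*(N:ℝ) + c := by
          rw [hNR]
          have i1 : (K:ℝ)*c ≤ (K:ℝ)*π := mul_le_mul_of_nonneg_left hcle hK0
          have i2 : 0 ≤ (K:ℝ)*π := mul_nonneg hK0 hπ.le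
          linarith
        calc (K:ℝ)*c < 2*π*(N:ℝ) + c := h4
          _ ≤ -(φ - (j:ℝ)*c) := by linarith
          _ ≤ |φ - (j:ℝ)*c| := neg_le_abs _
    unfold Tterm
    rw [hχ0, mul_zero]
  have e2 : (∫ φ in (0:ℝ)..(2*π), ∑' j : ℤ, Tterm (⇑f) ψ χ c r θ j φ)
      = ∫ φ in (0:ℝ)..(2*π), ∑ j ∈ Finset.Icc (1 - 2*(m:ℤ)*(N:ℕ)) (2*(m:ℤ)*(N:ℕ) + 2*(m:ℤ)),
          Tterm (⇑f) ψ χ c r θ j φ := by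
    apply intervalIntegral.integral_congr
    intro φ hφ
    exact tsum_eq_sum (fun j hj => hTzero φ hφ j hj)
  ------------------------------------------------------------------
  -- Step B : swap integral and finite sum
  ------------------------------------------------------------------
  have e3 : (∫ φ in (0:ℝ)..(2*π), ∑ j ∈ Finset.Icc (1 - 2*(m:ℤ)*(N:ℕ)) (2*(m:ℤ)*(N:ℕ) + 2*(m:ℤ)),
          Tterm (⇑f) ψ χ c r θ j φ)
      = ∑ j ∈ Finset.Icc (1 - 2*(m:ℤ)*(N:ℕ)) (2*(m:ℤ)*(N:ℕ) + 2*(m:ℤ)),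
          ∫ φ in (0:ℝ)..(2*π), Tterm (⇑f) ψ χ c r θ j φ := by
    apply intervalIntegral.integral_finset_sum
    intro j _
    exact (Tterm_cont f ψ χ hχc c r θ j).intervalIntegrable _ _
  ------------------------------------------------------------------
  -- Step C : shift each integral
  ------------------------------------------------------------------
  have e4 : ∀ j : ℤ, (∫ φ in (0:ℝ)..(2*π), Tterm (⇑f) ψ χ c r θ j φ)
      = ∫ t in (-((j:ℝ)*c))..(2*π - (j:ℝ)*c), gterm (⇑f) ψ χ c r θ j t := by
    intro j
    have hshift := intervalIntegral.integral_comp_add_right (a := -((j:ℝ)*c))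
      (b := 2*π - (j:ℝ)*c) (f := Tterm (⇑f) ψ χ c r θ j) ((j:ℝ)*c)
    rw [neg_add_cancel, sub_add_cancel] at hshift
    rw [← hshift]
    apply intervalIntegral.integral_congr
    intro t _
    exact Tterm_shift (⇑f) ψ χ c r θ j t
  ------------------------------------------------------------------
  -- Step D : regroup the sum by residues mod 2m
  ------------------------------------------------------------------
  have e5 : (∑ j ∈ Finset.Icc (1 - 2*(m:ℤ)*(N:ℕ)) (2*(m:ℤ)*(N:ℕ) + 2*(m:ℤ)),
        ∫ t in (-((j:ℝ)*c))..(2*π - (j:ℝ)*c), gterm (⇑f) ψ χ c r θ j t)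
      = ∑ k ∈ Finset.Icc (1:ℤ) (2*(m:ℤ)), ∑ n ∈ Finset.Icc (-(N:ℤ)) (N:ℤ),
          ∫ t in (-(((k + 2*(m:ℤ)*n : ℤ):ℝ)*c))..(2*π - ((k + 2*(m:ℤ)*n : ℤ):ℝ)*c),
            gterm (⇑f) ψ χ c r θ (k + 2*(m:ℤ)*n) t := by
    exact sum_Icc_decompose
      (fun j : ℤ => ∫ t in (-((j:ℝ)*c))..(2*π - (j:ℝ)*c), gterm (⇑f) ψ χ c r θ j t)
      (2*(m:ℤ)) N (by omega)
  ------------------------------------------------------------------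
  -- Step E : for each k, the n-sum is the integral over ℝ
  ------------------------------------------------------------------
  have stepE : ∀ k : ℤ, k ∈ Finset.Icc (1:ℤ) (2*(m:ℤ)) →
      (∑ n ∈ Finset.Icc (-(N:ℤ)) (N:ℤ),
          ∫ t in (-(((k + 2*(m:ℤ)*n : ℤ):ℝ)*c))..(2*π - ((k + 2*(m:ℤ)*n : ℤ):ℝ)*c),
            gterm (⇑f) ψ χ c r θ (k + 2*(m:ℤ)*n) t)
      = ∫ t : ℝ, gterm (⇑f) ψ χ c r θ k t := by
    intro k hk
    rw [Finset.mem_Icc] at hk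
    have hk1 : (1:ℝ) ≤ (k:ℝ) := by exact_mod_cast hk.1
    have hk2 : (k:ℝ) ≤ 2*(m:ℝ) := by exact_mod_cast hk.2
    set aa : ℕ → ℝ := fun i => -((k:ℝ)*c) - 2*π*(N:ℝ) + 2*π*(i:ℝ) with haa
    -- reindex to adjacent intervals
    have eE1 : (∑ n ∈ Finset.Icc (-(N:ℤ)) (N:ℤ),
          ∫ t in (-(((k + 2*(m:ℤ)*n : ℤ):ℝ)*c))..(2*π - ((k + 2*(m:ℤ)*n : ℤ):ℝ)*c),
            gterm (⇑f) ψ χ c r θ (k + 2*(m:ℤ)*n) t)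
        = ∑ i ∈ Finset.range (2*N+1), ∫ t in (aa i)..(aa (i+1)), gterm (⇑f) ψ χ c r θ k t := by
      refine Finset.sum_nbij' (i := fun n : ℤ => ((N:ℤ) - n).toNat) (j := fun i : ℕ => (N:ℤ) - i)
        ?_ ?_ ?_ ?_ ?_
      · intro n hn; rw [Finset.mem_Icc] at hn; rw [Finset.mem_range]; omega
      · intro i hi; rw [Finset.mem_range] at hi; rw [Finset.mem_Icc]; omega
      · intro n hn; rw [Finset.mem_Icc] at hn; omega
      · intro i hi; rw [Finset.mem_range] at hi; omega
      · intro n hn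
        rw [Finset.mem_Icc] at hn
        have htn : ((((N:ℤ) - n).toNat : ℕ) : ℝ) = (N:ℝ) - (n:ℝ) := by
          have h' : ((((N:ℤ) - n).toNat : ℕ) : ℤ) = (N:ℤ) - n := Int.toNat_of_nonneg (by omega)
          exact_mod_cast congrArg (fun z : ℤ => (z:ℝ)) h'
        rw [gterm_periodic (⇑f) ψ χ c r θ m h2mc k n]
        congr 1
        · rw [haa]
          dsimp only
          rw [htn]
          push_cast
          linear_combination (-(n:ℝ)) * h2mc
        · rw [haa]
          dsimp only
          rw [Nat.cast_add, Nat.cast_one, htn]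
          push_cast
          linear_combination (-(n:ℝ)) * h2mc
    rw [eE1]
    -- merge adjacent intervals
    have eE2 : (∑ i ∈ Finset.range (2*N+1), ∫ t in (aa i)..(aa (i+1)), gterm (⇑f) ψ χ c r θ k t)
        = ∫ t in (aa 0)..(aa (2*N+1)), gterm (⇑f) ψ χ c r θ k t := by
      apply intervalIntegral.sum_integral_adjacent_intervals
      intro i _
      exact (gterm_cont f ψ χ hχc c r θ k).intervalIntegrable _ _
    rw [eE2]
    -- extend to all of ℝ
    have hab : aa 0 ≤ aa (2*N+1) := by
      rw [haa]; dsimp only; push_cast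
      have i1 : 0 ≤ π*(N:ℝ) := mul_nonneg hπ.le (Nat.cast_nonneg N)
      linarith
    rw [intervalIntegral.integral_of_le hab]
    apply setIntegral_eq_integral_of_forall_compl_eq_zero
    intro t ht
    rw [Set.mem_Ioc, not_and_or, not_lt, not_le] at ht
    have hχ0 : χ (t/c) = 0 := by
      apply hKzero
      rw [abs_div, abs_of_pos hc, lt_div_iff₀ hc]
      have ha0 : aa 0 = -((k:ℝ)*c) - 2*π*(N:ℝ) := by rw [haa]; dsimp only; push_cast; ring
      have ha1 : aa (2*N+1) = -((k:ℝ)*c) + 2*π*(N:ℝ) + 2*π := by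
        rw [haa]; dsimp only; push_cast; ring
      rcases ht with ht | ht
      · -- t ≤ aa 0
        rw [ha0] at ht
        have h4 : (K:ℝ)*c < (k:ℝ)*c + 2*π*(N:ℝ) := by
          rw [hNR]
          have i1 : (K:ℝ)*c ≤ (K:ℝ)*π := mul_le_mul_of_nonneg_left hcle hK0
          have i2 : 0 ≤ (K:ℝ)*π := mul_nonneg hK0 hπ.le
          have i3 : 0 < (k:ℝ)*c := mul_pos (by linarith) hc
          linarith
        calc (K:ℝ)*c < (k:ℝ)*c + 2*π*(N:ℝ) := h4
          _ ≤ -t := by linarith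
          _ ≤ |t| := neg_le_abs t
      · -- aa (2N+1) < t
        rw [ha1] at ht
        have h4 : (K:ℝ)*c < -((k:ℝ)*c) + 2*π*(N:ℝ) + 2*π := by
          rw [hNR]
          have i1 : (K:ℝ)*c ≤ (K:ℝ)*π := mul_le_mul_of_nonneg_left hcle hK0
          have i2 : 0 ≤ (K:ℝ)*π := mul_nonneg hK0 hπ.le
          have i3 : (k:ℝ)*c ≤ 2*(m:ℝ)*c := mul_le_mul_of_nonneg_right hk2 hc.le
          linarith
        calc (K:ℝ)*c < -((k:ℝ)*c) + 2*π*(N:ℝ) + 2*π := h4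
          _ ≤ t := ht.le
          _ ≤ |t| := le_abs_self t
    unfold gterm
    rw [hχ0, mul_zero]
  ------------------------------------------------------------------
  -- Step F : the right-hand side
  ------------------------------------------------------------------
  have hcC : (c:ℂ) ≠ 0 := by exact_mod_cast hc.ne'
  have eR : ∀ t : ℝ, ((c⁻¹ : ℝ) : ℂ) * χ (t/c) * directRec (⇑f) ψ s h m (r • omega (θ - t))
      = ∑ k ∈ Finset.Icc 1 (2*m), gterm (⇑f) ψ χ c r θ (k : ℤ) t := by
    intro t
    have hkey : ∀ X χv : ℂ, ((c⁻¹ : ℝ) : ℂ) * χv * ((c:ℂ) * X) = X * χv := by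
      intro X χv
      have h1 : ((c⁻¹ : ℝ) : ℂ) * (c:ℂ) = 1 := by
        push_cast
        exact inv_mul_cancel₀ hcC
      calc ((c⁻¹ : ℝ) : ℂ) * χv * ((c:ℂ) * X) = (((c⁻¹ : ℝ) : ℂ) * (c:ℂ)) * (X * χv) := by ring
        _ = X * χv := by rw [h1, one_mul]
    unfold directRec gterm
    have hsc : (s:ℂ) * (h:ℂ) = (c:ℂ) := by rw [hc_def]; push_cast; ring
    rw [hsc, ← hc_def, Finset.mul_sum, Finset.mul_sum]
    apply Finset.sum_congr rfl
    intro k _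
    simp only [inner_smul_omega, Int.cast_natCast]
    exact hkey _ _
  have e6 : (∫ t : ℝ, ((c⁻¹ : ℝ) : ℂ) * χ (t/c) * directRec (⇑f) ψ s h m (r • omega (θ - t)))
      = ∑ k ∈ Finset.Icc 1 (2*m), ∫ t : ℝ, gterm (⇑f) ψ χ c r θ (k : ℤ) t := by
    simp only [eR]
    apply MeasureTheory.integral_finset_sum
    intro k _
    apply (gterm_cont f ψ χ hχc c r θ k).integrable_of_hasCompactSupport
    unfold gterm
    apply HasCompactSupport.mul_left
    have hcs := hχ_supp.comp_smul (inv_ne_zero hc.ne')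
    simpa [smul_eq_mul, div_eq_inv_mul] using hcs
  ------------------------------------------------------------------
  -- Step G : match the two index sets
  ------------------------------------------------------------------
  have e7 : (∑ k ∈ Finset.Icc (1:ℤ) (2*(m:ℤ)), ∫ t : ℝ, gterm (⇑f) ψ χ c r θ k t)
      = ∑ k ∈ Finset.Icc 1 (2*m), ∫ t : ℝ, gterm (⇑f) ψ χ c r θ (k : ℤ) t := by
    refine Finset.sum_nbij' (i := fun k : ℤ => k.toNat) (j := fun k : ℕ => (k:ℤ))
      ?_ ?_ ?_ ?_ ?_
    · intro k hk; rw [Finset.mem_Icc] at hk ⊢; omega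
    · intro k hk; rw [Finset.mem_Icc] at hk ⊢; omega
    · intro k hk; rw [Finset.mem_Icc] at hk; omega
    · intro k hk; rw [Finset.mem_Icc] at hk; omega
    · intro k hk
      rw [Finset.mem_Icc] at hk
      rw [Int.toNat_of_nonneg (by omega : (0:ℤ) ≤ k)]
  ------------------------------------------------------------------
  -- assemble
  ------------------------------------------------------------------
  rw [e1, e2, e3, Finset.sum_congr rfl (fun j _ => e4 j), e5,
    Finset.sum_congr rfl stepE, e7, ← e6]
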